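/- Let B be a supersoluble brace. If B is left-nilpotent and Ker(λ) ⊆ Z_n(B,·) for some n ∈ ℕ (where Z_n(B,·) is the n-th term of the upper central series of the multiplicative group), then the multiplicative group (B,·) is nilpotent. -/

import Mathlib

/-- A (skew left) brace: a set with an additive group structure (not necessarily abelian)
and a multiplicative group structure sharing the same identity, satisfying the skew
distributive law `a * (b + c) = a * b + -a + a * c`. -/
class SkewBrace (B : Type*) extends AddGroup B, Group B where
  one_eq_zero : (1 : B) = (0 : B)
  skew_distrib : ∀ a b c : B, a * (b + c) = a * b + -a + a * c

/-- A group is supersoluble if it has a finite chain of normal subgroups with all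
factors cyclic. -/
def Group.IsSupersoluble (G : Type*) [Group G] : Prop :=
  ∃ (n : ℕ) (H : ℕ → Subgroup G),
    H 0 = ⊥ ∧ H n = ⊤ ∧ (∀ i, (H i).Normal) ∧ (∀ i, i < n → H i ≤ H (i + 1)) ∧
    ∀ i, i < n → ∃ x ∈ H (i + 1), ∀ y ∈ H (i + 1), ∃ k : ℤ, (x ^ k)⁻¹ * y ∈ H i

namespace SkewBrace

variable {B : Type*} [SkewBrace B]

/-- `lam a b = -a + a * b`, i.e. `λ_a(b)`. -/
def lam (a b : B) : B := -a + a * b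

/-- the star operation `a ∗ b = λ_a(b) - b`. -/
def starOp (a b : B) : B := lam a b + -b

/-- the additive commutator `[a,b]_+`. -/
def addCommutator (a b : B) : B := -a + -b + a + b

/-- A subbrace of `B`: a subset that is a subgroup of both `(B,+)` and `(B,·)`. -/
structure Subbrace (B : Type*) [SkewBrace B] where
  carrier : Set B
  zero_mem : (0 : B) ∈ carrier
  add_mem : ∀ {a b : B}, a ∈ carrier → b ∈ carrier → a + b ∈ carrier
  neg_mem : ∀ {a : B}, a ∈ carrier → -a ∈ carrier
  mul_mem : ∀ {a b : B}, a ∈ carrier → b ∈ carrier → a * b ∈ carrier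
  inv_mem : ∀ {a : B}, a ∈ carrier → a⁻¹ ∈ carrier

/-- An ideal of `B`: a subbrace that is normal in `(B,+)` and in `(B,·)` and is
invariant under all the maps `λ_b`. -/
structure BraceIdeal (B : Type*) [SkewBrace B] extends Subbrace B where
  addConj_mem : ∀ (b : B) {a : B}, a ∈ carrier → b + a + -b ∈ carrier
  mulConj_mem : ∀ (b : B) {a : B}, a ∈ carrier → b * a * b⁻¹ ∈ carrier
  lam_mem : ∀ (b : B) {a : B}, a ∈ carrier → lam b a ∈ carrier

/-- The additive subgroup underlying a subbrace. -/
def Subbrace.addSubgroup (S : Subbrace B) : AddSubgroup B where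
  carrier := S.carrier
  zero_mem' := S.zero_mem
  add_mem' := S.add_mem
  neg_mem' := S.neg_mem

/-- The multiplicative subgroup underlying a subbrace. -/
def Subbrace.subgroup (S : Subbrace B) : Subgroup B where
  carrier := S.carrier
  one_mem' := by rw [one_eq_zero]; exact S.zero_mem
  mul_mem' := S.mul_mem
  inv_mem' := S.inv_mem

/-- Given ideals `J ≤ I` of `B`, `MemSocQuotRel I J x` says that the coset of `x`
lies in `Soc(I/J) = Ker(λ) ∩ Z(I/J, +)` (for `I = B` take `I = Set.univ`). -/
def MemSocQuotRel (I J : Set B) (x : B) : Prop :=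
  x ∈ I ∧ (∀ y ∈ I, -y + lam x y ∈ J) ∧ ∀ y ∈ I, -(y + x) + (x + y) ∈ J

/-- Given ideals `J ≤ I` of `B`, `MemZetaQuotRel I J x` says that the coset of `x`
lies in `ζ(I/J) = Soc(I/J) ∩ Z(I/J, ·)`. -/
def MemZetaQuotRel (I J : Set B) (x : B) : Prop :=
  MemSocQuotRel I J x ∧ ∀ y ∈ I, (y * x)⁻¹ * (x * y) ∈ J

/-- The coset of `x` lies in `Soc(B/J)`. -/
def MemSocQuot (J : Set B) (x : B) : Prop := MemSocQuotRel Set.univ J x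

/-- The coset of `x` lies in `ζ(B/J)`. -/
def MemZetaQuot (J : Set B) (x : B) : Prop := MemZetaQuotRel Set.univ J x

/-- For ideals `I ≤ J`, the additive group of the quotient `J/I` is infinite cyclic. -/
def QuotAddInfCyclic (I J : Set B) : Prop :=
  ∃ x ∈ J, (∀ y ∈ J, ∃ n : ℤ, -(n • x) + y ∈ I) ∧ ∀ n : ℤ, n • x ∈ I → n = 0

/-- For ideals `I ≤ J`, the quotient `J/I` has prime order `p`. -/
def QuotPrimeOrder (I J : Set B) (p : ℕ) : Prop :=
  p.Prime ∧ ∃ x ∈ J, x ∉ I ∧ p • x ∈ I ∧ ∀ y ∈ J, ∃ n : ℤ, -(n • x) + y ∈ I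

/-- A brace is supersoluble if it has a finite chain of ideals each factor of which
either is additively infinite cyclic and contained in the socle of the corresponding
quotient, or has prime order. -/
def IsSupersoluble (B : Type*) [SkewBrace B] : Prop :=
  ∃ (n : ℕ) (I : ℕ → BraceIdeal B),
    (I 0).carrier = {0} ∧ (I n).carrier = Set.univ ∧
    (∀ i, i < n → (I i).carrier ⊆ (I (i + 1)).carrier) ∧
    ∀ i, i < n →
      (QuotAddInfCyclic (I i).carrier (I (i + 1)).carrier ∧
        ∀ x ∈ (I (i + 1)).carrier, MemSocQuot (I i).carrier x) ∨
      ∃ p : ℕ, QuotPrimeOrder (I i).carrier (I (i + 1)).carrier p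

/-- The upper socle series of the brace (carrier of the ideal) `I`. -/
def socChainRel (I : Set B) : ℕ → Set B
  | 0 => {0}
  | n + 1 => {x | MemSocQuotRel I (socChainRel I n) x}

/-- The upper central series of the brace (carrier of the ideal) `I`. -/
def zetaChainRel (I : Set B) : ℕ → Set B
  | 0 => {0}
  | n + 1 => {x | MemZetaQuotRel I (zetaChainRel I n) x}

/-- The upper socle series `Soc_n(B)` of `B`. -/
def socChain (B : Type*) [SkewBrace B] : ℕ → Set B := socChainRel Set.univ

/-- The upper central series `ζ_n(B)` of `B`. -/
def zetaChain (B : Type*) [SkewBrace B] : ℕ → Set B := zetaChainRel Set.univ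

/-- A brace is centrally nilpotent if its upper central series reaches `B`. -/
def IsCentrallyNilpotent (B : Type*) [SkewBrace B] : Prop :=
  ∃ m : ℕ, zetaChain B m = Set.univ

end SkewBrace

namespace SkewBrace

/-- The left series of the brace `B`: `L 0 = B`, and `L (n+1)` is the additive
subgroup generated by all `a ∗ x` with `a ∈ B`, `x ∈ L n`. -/
def leftChain (B : Type*) [SkewBrace B] : ℕ → Set B
  | 0 => Set.univ
  | n + 1 => ↑(AddSubgroup.closure {z : B | ∃ a : B, ∃ x ∈ leftChain B n, z = starOp a x})

/-- A brace is left-nilpotent if its left series reaches `{0}`. -/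
def IsLeftNilpotent (B : Type*) [SkewBrace B] : Prop :=
  ∃ m : ℕ, leftChain B m = {0}

end SkewBrace

/-!
Each factor `I (i+1) / I i` of the supersoluble series is cyclic, infinite or of prime order, so
`λ_a` acts on it as multiplication by an integer `k_a`. Descending the left series inside
`I (i+1)` until the next step lands in `I i` produces a nonzero element `y` of the factor with
`a ∗ y = 0` for every `a`, and since `ℤ` resp. `ℤ/p` has no zero divisors this forces `k_a = 1`.
Thus `(B,·)` acts trivially on every factor; in the semidirect product `(B,+) ⋊_λ (B,·)` this
says that `(B,·)` stabilizes a normal series of length `l`, and the three subgroups lemma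
(Kaloujnine's argument) shows that `γ_l(B,·)` acts trivially on `(B,+)`. Hence
`γ_l(B,·) ≤ Ker λ ≤ Z_n(B,·)`, so `γ_(l+n)(B,·) = 1`.
-/

open scoped commutatorElement

namespace Subgroup

variable {G : Type*} [Group G]

theorem commutator_commutator_le_of_rotate {H₁ H₂ H₃ N : Subgroup G} [N.Normal]
    (h₁ : ⁅⁅H₂, H₃⁆, H₁⁆ ≤ N) (h₂ : ⁅⁅H₃, H₁⁆, H₂⁆ ≤ N) : ⁅⁅H₁, H₂⁆, H₃⁆ ≤ N := by
  have hbot : ∀ K : Subgroup G, K ≤ N ↔ K.map (QuotientGroup.mk' N) = ⊥ := fun K => by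
    rw [map_eq_bot_iff, QuotientGroup.ker_mk']
  simp only [hbot, map_commutator] at h₁ h₂ ⊢
  exact commutator_commutator_eq_bot_of_rotate h₁ h₂

theorem commutator_lowerCentralSeries_le_of_stabilizes (H : Subgroup G) (V : ℕ → Subgroup G)
    [∀ i, (V i).Normal] {n : ℕ} (hV : ∀ i < n, ⁅H, V (i + 1)⁆ ≤ V i) :
    ∀ j i, i + j ≤ n → ⁅H.lowerCentralSeries j, V (i + j)⁆ ≤ V i := by
  intro j
  induction j with
  | zero => exact fun i _ => commutator_le_right _ _
  | succ j ih =>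
    intro i hij
    rw [lowerCentralSeries_succ]
    apply commutator_commutator_le_of_rotate
    · calc ⁅⁅H, V (i + (j + 1))⁆, H.lowerCentralSeries j⁆
          ≤ ⁅V (i + j), H.lowerCentralSeries j⁆ := commutator_mono (hV (i + j) (by omega)) le_rfl
        _ = ⁅H.lowerCentralSeries j, V (i + j)⁆ := commutator_comm _ _
        _ ≤ V i := ih i (by omega)
    · calc ⁅⁅V (i + (j + 1)), H.lowerCentralSeries j⁆, H⁆
          = ⁅H, ⁅H.lowerCentralSeries j, V (i + 1 + j)⁆⁆ := by
            rw [commutator_comm, commutator_comm (V _), show i + (j + 1) = i + 1 + j by omega]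
        _ ≤ ⁅H, V (i + 1)⁆ := commutator_mono le_rfl (ih (i + 1) (by omega))
        _ ≤ V i := hV i (by omega)

theorem lowerCentralSeries_add_eq_bot_of_le_upperCentralSeries {k n : ℕ}
    (h : (⊤ : Subgroup G).lowerCentralSeries k ≤ upperCentralSeries G n) :
    (⊤ : Subgroup G).lowerCentralSeries (k + n) = ⊥ := by
  induction n generalizing k with
  | zero => exact le_bot_iff.mp h
  | succ n ih =>
    rw [show k + (n + 1) = k + 1 + n by omega]
    exact ih ((commutator_mono h le_rfl).trans (commutator_upperCentralSeries_top_le G n))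

end Subgroup

namespace SemidirectProduct

variable {N G : Type*} [Group N] [Group G] {φ : G →* MulAut N}

theorem normal_map_inl (H : Subgroup N) [hN : H.Normal] (hH : ∀ g, ∀ h ∈ H, φ g h ∈ H) :
    (H.map (inl : N →* N ⋊[φ] G)).Normal where
  conj_mem := by
    rintro _ ⟨h, hh, rfl⟩ s
    have hconj : s * inl h * s⁻¹ = inl (s.left * φ s.right h * s.left⁻¹) := by
      conv_lhs => rw [← inl_left_mul_inr_right s]
      simp only [map_mul, map_inv, inl_aut]
      group
    rw [hconj]
    exact ⟨_, hN.conj_mem _ (hH _ _ hh) _, rfl⟩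

theorem commutatorElement_inr_inl (g : G) (n : N) :
    ⁅(inr g : N ⋊[φ] G), inl n⁆ = (inl (φ g n * n⁻¹) : N ⋊[φ] G) := by
  rw [commutatorElement_def, map_mul, inl_aut, map_inv, map_inv]

end SemidirectProduct

theorem AddMonoidHom.apply_eq_self_of_apply_zsmul_eq {Q : Type*} [AddGroup Q] {c : Q}
    (hc : addOrderOf c = 0 ∨ (addOrderOf c).Prime) (f : Q →+ Q) {k n : ℤ}
    (hk : f c = k • c) (hn : n • c ≠ 0) (hfix : f (n • c) = n • c) : f c = c := by
  have hnk : (addOrderOf c : ℤ) ∣ n * (k - 1) := by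
    rw [addOrderOf_dvd_iff_zsmul_eq_zero, mul_sub, mul_one, sub_zsmul, mul_zsmul,
      ← hk, ← map_zsmul, hfix, add_neg_cancel]
  have hn' : ¬ (addOrderOf c : ℤ) ∣ n := by rwa [addOrderOf_dvd_iff_zsmul_eq_zero]
  have hk1 : (addOrderOf c : ℤ) ∣ k - 1 := by
    rcases hc with h | h
    · rw [h, Nat.cast_zero, zero_dvd_iff] at hnk hn' ⊢
      exact (mul_eq_zero.mp hnk).resolve_left hn'
    · exact ((Nat.prime_iff_prime_int.mp h).dvd_or_dvd hnk).resolve_left hn'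
  rw [addOrderOf_dvd_iff_zsmul_eq_zero, sub_zsmul, one_zsmul, add_neg_eq_zero] at hk1
  rw [hk, hk1]

namespace SkewBrace

section

variable {B : Type*} [SkewBrace B]

theorem lam_add (a x y : B) : lam a (x + y) = lam a x + lam a y := by
  simp only [lam, skew_distrib, add_assoc]

theorem lam_one (x : B) : lam 1 x = x := by
  rw [lam, one_mul, one_eq_zero, neg_zero, zero_add]

theorem mul_eq_add_lam (a x : B) : a * x = a + lam a x := by
  rw [lam, add_neg_cancel_left]

theorem lam_mul (a b x : B) : lam (a * b) x = lam a (lam b x) := by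
  apply add_left_cancel (a := a * b)
  rw [← mul_eq_add_lam, mul_assoc, mul_eq_add_lam b, skew_distrib, add_assoc, ← lam]

def lamAut : B →* MulAut (Multiplicative B) where
  toFun a :=
    { toFun := fun x => .ofAdd (lam a x.toAdd)
      invFun := fun x => .ofAdd (lam a⁻¹ x.toAdd)
      left_inv := fun x => by simp only [toAdd_ofAdd, ← lam_mul, inv_mul_cancel, lam_one]; rfl
      right_inv := fun x => by simp only [toAdd_ofAdd, ← lam_mul, mul_inv_cancel, lam_one]; rfl
      map_mul' := fun x y => lam_add a x.toAdd y.toAdd }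
  map_one' := MulEquiv.ext fun x => lam_one x.toAdd
  map_mul' a b := MulEquiv.ext fun x => lam_mul a b x.toAdd

theorem BraceIdeal.starOp_mem (P : BraceIdeal B) (a : B) {x : B} (hx : x ∈ P.carrier) :
    starOp a x ∈ P.carrier :=
  P.add_mem (P.lam_mem a hx) (P.neg_mem hx)

instance BraceIdeal.normal_addSubgroup (P : BraceIdeal B) : P.addSubgroup.Normal :=
  ⟨fun _ hx b => P.addConj_mem b hx⟩

def BraceIdeal.semidirectSubgroup (P : BraceIdeal B) : Subgroup (Multiplicative B ⋊[lamAut] B) :=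
  (AddSubgroup.toSubgroup P.addSubgroup).map SemidirectProduct.inl

instance BraceIdeal.normal_semidirectSubgroup (P : BraceIdeal B) : P.semidirectSubgroup.Normal :=
  have : (AddSubgroup.toSubgroup P.addSubgroup).Normal := ⟨fun _ hx b => P.addConj_mem b.toAdd hx⟩
  SemidirectProduct.normal_map_inl _ fun a _ hx => P.lam_mem a hx

theorem BraceIdeal.inl_mem_semidirectSubgroup {P : BraceIdeal B} {x : Multiplicative B} :
    SemidirectProduct.inl x ∈ P.semidirectSubgroup ↔ x.toAdd ∈ P.carrier :=
  Subgroup.mem_map_iff_mem SemidirectProduct.inl_injective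

theorem commutatorElement_inr_inl_eq_inl_starOp (a : B) (x : Multiplicative B) :
    ⁅(SemidirectProduct.inr a : Multiplicative B ⋊[lamAut] B), SemidirectProduct.inl x⁆ =
      (SemidirectProduct.inl (.ofAdd (starOp a x.toAdd)) : Multiplicative B ⋊[lamAut] B) :=
  SemidirectProduct.commutatorElement_inr_inl a x

theorem lam_eq_self_of_mem_lowerCentralSeries {n : ℕ} {I : ℕ → BraceIdeal B}
    (h0 : (I 0).carrier = {0}) (hn : (I n).carrier = Set.univ)
    (hI : ∀ i < n, ∀ a, ∀ x ∈ (I (i + 1)).carrier, starOp a x ∈ (I i).carrier)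
    {g : B} (hg : g ∈ (⊤ : Subgroup B).lowerCentralSeries n) (x : B) : lam g x = x := by
  let H : Subgroup (Multiplicative B ⋊[lamAut] B) := (⊤ : Subgroup B).map SemidirectProduct.inr
  have hstab : ∀ i < n, ⁅H, (I (i + 1)).semidirectSubgroup⁆ ≤ (I i).semidirectSubgroup := by
    intro i hi
    rw [Subgroup.commutator_le]
    rintro _ ⟨a, -, rfl⟩ _ ⟨y, hy, rfl⟩
    rw [commutatorElement_inr_inl_eq_inl_starOp, BraceIdeal.inl_mem_semidirectSubgroup]
    exact hI i hi a _ hy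
  have hmem : ⁅(SemidirectProduct.inr g : Multiplicative B ⋊[lamAut] B),
      SemidirectProduct.inl (.ofAdd x)⁆ ∈ (I 0).semidirectSubgroup := by
    refine Subgroup.commutator_lowerCentralSeries_le_of_stabilizes H
      (fun i => (I i).semidirectSubgroup) hstab n 0 (by omega) ?_
    rw [zero_add, ← Subgroup.map_lowerCentralSeries]
    exact Subgroup.commutator_mem_commutator ⟨g, hg, rfl⟩
      (BraceIdeal.inl_mem_semidirectSubgroup.mpr (by rw [hn]; trivial))
  rw [commutatorElement_inr_inl_eq_inl_starOp, BraceIdeal.inl_mem_semidirectSubgroup, h0] at hmem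
  exact add_neg_eq_zero.mp hmem

theorem exists_notMem_forall_starOp_mem (hB : IsLeftNilpotent B) {S N : Set B}
    (hS : ∀ a, ∀ x ∈ S, starOp a x ∈ S) (hN : 0 ∈ N) (hSN : ¬ S ⊆ N) :
    ∃ y ∈ S, y ∉ N ∧ ∀ a, starOp a y ∈ N := by
  obtain ⟨m, hm⟩ := hB
  by_contra! h
  have hchain : ∀ k, ∃ y ∈ S, y ∈ leftChain B k ∧ y ∉ N := by
    intro k
    induction k with
    | zero =>
      obtain ⟨y, hyS, hyN⟩ := Set.not_subset.mp hSN
      exact ⟨y, hyS, trivial, hyN⟩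
    | succ k ih =>
      obtain ⟨y, hyS, hyL, hyN⟩ := ih
      obtain ⟨a, ha⟩ := h y hyS hyN
      exact ⟨_, hS a y hyS, AddSubgroup.subset_closure ⟨a, y, hyL, rfl⟩, ha⟩
  obtain ⟨y, -, hyL, hyN⟩ := hchain m
  rw [hm, Set.mem_singleton_iff] at hyL
  exact hyN (hyL ▸ hN)

theorem starOp_mem_of_cyclic_factor (hB : IsLeftNilpotent B) {N M : BraceIdeal B} {c : B}
    (hcM : c ∈ M.carrier)
    (hgen : ∀ y ∈ M.carrier, ∃ k : ℤ, (y : B ⧸ N.addSubgroup) = k • (c : B ⧸ N.addSubgroup))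
    (hc : addOrderOf (c : B ⧸ N.addSubgroup) = 0 ∨
      (addOrderOf (c : B ⧸ N.addSubgroup)).Prime)
    (a : B) {x : B} (hx : x ∈ M.carrier) : starOp a x ∈ N.carrier := by
  let f := QuotientAddGroup.map N.addSubgroup N.addSubgroup
    (AddMonoidHom.mk' (lam a) (lam_add a)) fun _ hz => N.lam_mem a hz
  have hf : ∀ z : B, f z = lam a z := fun _ => rfl
  have hfix_iff : ∀ z : B, f z = z ↔ starOp a z ∈ N.carrier := fun z => by
    rw [hf, QuotientAddGroup.eq_iff_sub_mem, sub_eq_add_neg]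
    rfl
  have hc0 : (c : B ⧸ N.addSubgroup) ≠ 0 := by
    intro h
    rw [h, addOrderOf_zero] at hc
    exact hc.elim one_ne_zero Nat.not_prime_one
  obtain ⟨y, hyM, hyN, hy⟩ := exists_notMem_forall_starOp_mem hB (fun a _ hx => M.starOp_mem a hx)
    N.zero_mem fun h => hc0 ((QuotientAddGroup.eq_zero_iff c).mpr (h hcM))
  obtain ⟨n, hn⟩ := hgen y hyM
  obtain ⟨k, hk⟩ := hgen (lam a c) (M.lam_mem a hcM)
  have hfc : f c = c := f.apply_eq_self_of_apply_zsmul_eq hc (by rw [hf, hk])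
    (by rw [← hn]; exact fun h => hyN ((QuotientAddGroup.eq_zero_iff y).mp h))
    (by rw [← hn]; exact (hfix_iff y).mpr (hy a))
  obtain ⟨m, hm⟩ := hgen x hx
  rw [← hfix_iff, hm, map_zsmul, hfc]

theorem mk_eq_zsmul_mk {N : BraceIdeal B} {c y : B} {k : ℤ} (h : -(k • c) + y ∈ N.carrier) :
    (y : B ⧸ N.addSubgroup) = k • (c : B ⧸ N.addSubgroup) := by
  rw [← QuotientAddGroup.mk_zsmul]
  exact ((QuotientAddGroup.eq).mpr h).symm

theorem starOp_mem_of_quotAddInfCyclic (hB : IsLeftNilpotent B) {N M : BraceIdeal B}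
    (h : QuotAddInfCyclic N.carrier M.carrier) (a : B) {x : B} (hx : x ∈ M.carrier) :
    starOp a x ∈ N.carrier := by
  obtain ⟨c, hcM, hgen, hfree⟩ := h
  refine starOp_mem_of_cyclic_factor hB hcM (fun y hy => ?_) (.inl ?_) a hx
  · obtain ⟨k, hk⟩ := hgen y hy
    exact ⟨k, mk_eq_zsmul_mk hk⟩
  · have h := addOrderOf_nsmul_eq_zero (c : B ⧸ N.addSubgroup)
    rw [← natCast_zsmul, ← QuotientAddGroup.mk_zsmul, QuotientAddGroup.eq_zero_iff] at h
    exact_mod_cast hfree _ h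

theorem starOp_mem_of_quotPrimeOrder (hB : IsLeftNilpotent B) {N M : BraceIdeal B} {p : ℕ}
    (h : QuotPrimeOrder N.carrier M.carrier p) (a : B) {x : B} (hx : x ∈ M.carrier) :
    starOp a x ∈ N.carrier := by
  obtain ⟨hp, c, hcM, hcN, hpc, hgen⟩ := h
  have : Fact p.Prime := ⟨hp⟩
  refine starOp_mem_of_cyclic_factor hB hcM (fun y hy => ?_) (.inr ?_) a hx
  · obtain ⟨k, hk⟩ := hgen y hy
    exact ⟨k, mk_eq_zsmul_mk hk⟩
  · rwa [addOrderOf_eq_prime ((QuotientAddGroup.eq_zero_iff _).mpr hpc)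
      fun h => hcN ((QuotientAddGroup.eq_zero_iff c).mp h)]

end

/-- Let `B` be a supersoluble brace. If `B` is left-nilpotent and
`Ker(λ) ⊆ Z_n(B,·)` for some `n`, then `(B,·)` is nilpotent. -/
theorem mul_nilpotent_of_leftNilpotent (B : Type*) [SkewBrace B]
    (hB : IsSupersoluble B) (hln : IsLeftNilpotent B) (n : ℕ)
    (hker : {x : B | ∀ b : B, lam x b = b} ⊆ ↑(upperCentralSeries B n)) :
    Group.IsNilpotent B := by
  obtain ⟨l, I, hI0, hIl, -, hfactor⟩ := hB
  have hstar : ∀ i < l, ∀ a, ∀ x ∈ (I (i + 1)).carrier, starOp a x ∈ (I i).carrier := by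
    intro i hi a x hx
    rcases hfactor i hi with ⟨hcyc, -⟩ | ⟨p, hp⟩
    · exact starOp_mem_of_quotAddInfCyclic hln hcyc a hx
    · exact starOp_mem_of_quotPrimeOrder hln hp a hx
  have hlcs : (⊤ : Subgroup B).lowerCentralSeries l ≤ Subgroup.upperCentralSeries B n :=
    fun _ hg => hker fun x => lam_eq_self_of_mem_lowerCentralSeries hI0 hIl hstar hg x
  exact Subgroup.nilpotent_iff_lowerCentralSeries.mpr
    ⟨l + n, Subgroup.lowerCentralSeries_add_eq_bot_of_le_upperCentralSeries hlcs⟩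

end SkewBrace
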